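/- arXiv:2506.17235 — 2 statements merged into one kernel-verified Lean document; each statement's English description precedes it below -/
import Mathlib

section
/- Let p be an odd prime with 3 | (p − 1), and let n be an integer with p ∤ n. Then ∑_{m=1}^{p-1} |∑_{a=0}^{p-1} e((m a³ + n a)/p)|⁴ = 2p³ − 7p². -/
/-!
For fixed `m ≠ 0`, write `S(u, m)² = ∑ₛ ψ(u s) W(s)` with `W(s) = ∑ₐ ψ(m (a³ + (s - a)³))`.
By Plancherel, `∑ᵤ |S(u, m)|⁴ = q ∑ₛ |W(s)|²`, and `W(s)` is, up to a unit factor, a quadratic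
Gauss sum, of modulus `√q` for `s ≠ 0`; hence `∑ᵤ |S(u, m)|⁴ = q² (2q - 1)`. The substitution
`a ↦ t a` shows that `V(u) = ∑ₘ |S(u, m)|⁴` only depends on whether `u = 0`, so summing over
`u` gives `V(0) + (q - 1) V(n) = q⁴ + (q - 1) q² (2q - 1)`. Finally `V(0)` is computed with a
cubic character `χ`: for `m ≠ 0`, `S(0, m) = χ̄(m) G(χ) + χ(m) G(χ̄)` is real, and in the sum of
`S(0, m)⁴` over `m` only the term `6 (G(χ) G(χ̄))² = 6 q²` survives the orthogonality of `χ`.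
-/

open Finset Complex Real ComplexConjugate

lemma Fintype.sum_eq_add_card_sub_one_mul {ι R : Type*} [Fintype ι] [DecidableEq ι] [CommRing R]
    (f : ι → R) (i : ι) {c : R} (hf : ∀ j ≠ i, f j = c) :
    ∑ j, f j = f i + (Fintype.card ι - 1) * c := by
  rw [← add_sum_erase _ _ (mem_univ i),
    Finset.sum_congr rfl fun j hj => hf j (ne_of_mem_erase hj), Finset.sum_const,
    card_erase_of_mem (mem_univ i), card_univ, nsmul_eq_mul,
    Nat.cast_sub (Fintype.card_pos_iff.mpr ⟨i⟩)]
  push_cast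
  ring

section Characters

variable {F : Type*} [Field F] [Fintype F] {ψ : AddChar F ℂ} {χ : MulChar F ℂ}

local notation "q" => Fintype.card F

lemma MulChar.apply_pow_orderOf (χ : MulChar F ℂ) {a : F} (ha : a ≠ 0) : χ a ^ orderOf χ = 1 := by
  rw [← MulChar.pow_apply' χ (orderOf_pos χ).ne', pow_orderOf_eq_one,
    MulChar.one_apply (isUnit_iff_ne_zero.mpr ha)]

lemma MulChar.sum_sum_range_orderOf_pow (χ : MulChar F ℂ) :
    ∑ y, ∑ j ∈ range (orderOf χ), χ y ^ j = q := by
  obtain ⟨k, hk⟩ := Nat.exists_eq_succ_of_ne_zero (orderOf_pos χ).ne'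
  have hj : ∀ j ∈ range k, ∑ y, χ y ^ (j + 1) = 0 := fun j hj => by
    simp only [← MulChar.pow_apply' χ j.succ_ne_zero]
    refine MulChar.sum_eq_zero_of_ne_one (pow_ne_one_of_lt_orderOf j.succ_ne_zero ?_)
    rw [hk]
    exact Nat.succ_lt_succ (mem_range.mp hj)
  rw [sum_comm, hk, sum_range_succ', sum_eq_zero hj]
  simp

lemma gaussSum_mul_gaussSum_sq_of_orderOf_eq_three (hψ : ψ.IsPrimitive) (hχ : orderOf χ = 3) :
    gaussSum χ ψ * gaussSum (χ ^ 2) ψ = q := by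
  have hχ1 : χ ≠ 1 := fun h => by simp [h] at hχ
  have hneg : χ (-1) = 1 := by
    rw [← χ.apply_pow_orderOf (neg_ne_zero.mpr one_ne_zero), hχ, ← map_pow]
    norm_num
  simpa [hχ, hneg] using gaussSum_mul_gaussSum_pow_orderOf_sub_one hχ1 hψ

variable [DecidableEq F]

/-- At `y = 0`, where `χ 0 = 0`, the formula holds because of the term `χ 0 ^ 0 = 1`. -/
lemma MulChar.card_pow_orderOf_eq (χ : MulChar F ℂ) (y : F) :
    (#{a | a ^ orderOf χ = y} : ℂ) = ∑ j ∈ range (orderOf χ), χ y ^ j := by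
  have hn : 0 < orderOf χ := orderOf_pos χ
  let bound : F → ℕ := fun y => if y = 0 then 1 else if χ y = 1 then orderOf χ else 0
  have hbound : ∀ y, ∑ j ∈ range (orderOf χ), χ y ^ j = bound y := fun y => by
    by_cases hy : y = 0
    · simp [bound, hy, zero_pow_eq, isOfFinOrder_of_finite χ]
    by_cases hχy : χ y = 1
    · simp [bound, hy, hχy]
    · simp [bound, hy, hχy, geom_sum_eq hχy, χ.apply_pow_orderOf hy]
  have hle : ∀ y, #{a | a ^ orderOf χ = y} ≤ bound y := fun y => by
    by_cases hy : y = 0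
    · simp only [bound, if_pos hy]
      refine card_le_one.mpr fun a ha b hb => ?_
      simp only [mem_filter, hy, pow_eq_zero_iff hn.ne'] at ha hb
      rw [ha.2, hb.2]
    by_cases hχy : χ y = 1
    · simp only [bound, if_neg hy, if_pos hχy]
      calc #{a | a ^ orderOf χ = y} ≤ #(Polynomial.nthRoots (orderOf χ) y).toFinset :=
            card_le_card fun a ha => Multiset.mem_toFinset.mpr
              ((Polynomial.mem_nthRoots hn).mpr (mem_filter.mp ha).2)
        _ ≤ orderOf χ := (Multiset.toFinset_card_le _).trans (Polynomial.card_nthRoots _ y)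
    · simp only [bound, if_neg hy, if_neg hχy, Nat.le_zero, card_eq_zero,
        filter_eq_empty_iff]
      rintro a - rfl
      exact hχy (by rw [map_pow, χ.apply_pow_orderOf (by rintro rfl; simp [hn.ne'] at hy)])
  have hsum : ∑ y : F, #{a | a ^ orderOf χ = y} = ∑ y, bound y := by
    apply Nat.cast_injective (R := ℂ)
    rw [← card_eq_sum_card_fiberwise (f := fun a : F => a ^ orderOf χ) (t := univ)
      (fun a _ => mem_univ _), card_univ, Nat.cast_sum, ← χ.sum_sum_range_orderOf_pow]
    exact sum_congr rfl fun y _ => hbound y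
  rw [hbound, (sum_eq_sum_iff_of_le fun y _ => hle y).mp hsum y (mem_univ y)]

lemma norm_sq_sum_addChar_quadratic (hψ : ψ.IsPrimitive) (h2 : (2 : F) ≠ 0) {α : F}
    (hα : α ≠ 0) (β : F) : ‖∑ c, ψ (α * c ^ 2 + β * c)‖ ^ 2 = q := by
  apply Complex.ofReal_injective
  push_cast
  rw [← mul_conj', map_sum, sum_mul_sum, sum_comm]
  calc ∑ e, ∑ c, ψ (α * c ^ 2 + β * c) * conj (ψ (α * e ^ 2 + β * e))
      = ∑ e, ∑ h, ψ (α * h ^ 2 + β * h) * ψ (e * (2 * α * h)) := by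
        refine sum_congr rfl fun e _ => ?_
        rw [← Equiv.sum_comp (Equiv.addLeft e)]
        refine sum_congr rfl fun h _ => ?_
        rw [← AddChar.map_neg_eq_conj, ← AddChar.map_add_eq_mul, ← AddChar.map_add_eq_mul]
        congr 1
        simp only [Equiv.coe_addLeft]
        ring
    _ = ∑ h, ψ (α * h ^ 2 + β * h) * if 2 * α * h = 0 then (q : ℂ) else 0 := by
        rw [sum_comm]
        simp only [← mul_sum, AddChar.sum_mulShift _ hψ, Nat.cast_ite, Nat.cast_zero]
    _ = q := by
        simp [h2, hα]

lemma sum_norm_sq_sum_addChar_mul (hψ : ψ.IsPrimitive) (W : F → ℂ) :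
    ∑ u, ‖∑ s, ψ (u * s) * W s‖ ^ 2 = q * ∑ s, ‖W s‖ ^ 2 := by
  apply Complex.ofReal_injective
  push_cast
  simp only [← mul_conj', map_sum, map_mul, sum_mul_sum]
  calc ∑ u, ∑ s, ∑ t, ψ (u * s) * W s * (conj (ψ (u * t)) * conj (W t))
      = ∑ s, ∑ t, W s * conj (W t) * ∑ u, ψ (u * (s - t)) := by
        rw [sum_comm]
        refine sum_congr rfl fun s _ => ?_
        rw [sum_comm]
        refine sum_congr rfl fun t _ => ?_
        rw [mul_sum]
        refine sum_congr rfl fun u _ => ?_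
        rw [← AddChar.map_neg_eq_conj, mul_sub, sub_eq_add_neg, AddChar.map_add_eq_mul]
        ring
    _ = q * ∑ s, W s * conj (W s) := by
        simp [AddChar.sum_mulShift _ hψ, sub_eq_zero, mul_sum, mul_comm]

end Characters

section CubicSums

variable {F : Type*} [Field F] [Fintype F] {ψ : AddChar F ℂ} {χ : MulChar F ℂ}

local notation "q" => Fintype.card F

variable (ψ) in
noncomputable def cubicSum (u m : F) : ℂ := ∑ a, ψ (m * a ^ 3 + u * a)

variable (ψ) in
noncomputable def cubicFourthMoment (u : F) : ℝ := ∑ m, ‖cubicSum ψ u m‖ ^ 4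

lemma cubicSum_sq (u m : F) :
    cubicSum ψ u m ^ 2 = ∑ s, ψ (u * s) * ∑ a, ψ (m * (a ^ 3 + (s - a) ^ 3)) := by
  rw [cubicSum, sq, sum_mul_sum]
  simp only [mul_sum]
  conv_rhs => rw [sum_comm]
  refine sum_congr rfl fun a _ => ?_
  rw [← Equiv.sum_comp (Equiv.subRight a)]
  refine sum_congr rfl fun s _ => ?_
  rw [← AddChar.map_add_eq_mul, ← AddChar.map_add_eq_mul]
  congr 1
  simp only [Equiv.subRight_apply]
  ring

lemma cubicSum_mul_mul_pow {t : F} (ht : t ≠ 0) (u m : F) :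
    cubicSum ψ (t * u) (t ^ 3 * m) = cubicSum ψ u m := by
  rw [cubicSum, cubicSum,
    ← Equiv.sum_comp (Equiv.mulLeft₀ t ht) (fun a => ψ (m * a ^ 3 + u * a))]
  refine sum_congr rfl fun a _ => ?_
  simp only [Equiv.mulLeft₀_apply]
  congr 1
  ring

lemma cubicFourthMoment_mul {t : F} (ht : t ≠ 0) (u : F) :
    cubicFourthMoment ψ (t * u) = cubicFourthMoment ψ u := by
  rw [cubicFourthMoment, cubicFourthMoment,
    ← Equiv.sum_comp (Equiv.mulLeft₀ _ (pow_ne_zero 3 ht))]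
  simp only [Equiv.mulLeft₀_apply, cubicSum_mul_mul_pow ht]

lemma conj_cubicSum_zero_left (m : F) : conj (cubicSum ψ 0 m) = cubicSum ψ 0 m := by
  rw [cubicSum, map_sum, ← Equiv.sum_comp (Equiv.neg F)]
  refine sum_congr rfl fun a _ => ?_
  rw [← AddChar.map_neg_eq_conj]
  congr 1
  simp only [Equiv.neg_apply]
  ring

variable [DecidableEq F]

lemma norm_sq_sum_addChar_cube_add_cube (hψ : ψ.IsPrimitive) (h2 : (2 : F) ≠ 0)
    (h3 : (3 : F) ≠ 0) {m : F} (hm : m ≠ 0) (s : F) :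
    ‖∑ a, ψ (m * (a ^ 3 + (s - a) ^ 3))‖ ^ 2 = if s = 0 then (q : ℝ) ^ 2 else q := by
  split_ifs with hs
  · simp [hs, Odd.neg_pow (by decide : Odd 3)]
  · have hsum : ∑ a, ψ (m * (a ^ 3 + (s - a) ^ 3))
        = ψ (m * s ^ 3) * ∑ a, ψ (3 * m * s * a ^ 2 + (-3 * m * s ^ 2) * a) := by
      rw [mul_sum]
      refine sum_congr rfl fun a _ => ?_
      rw [← AddChar.map_add_eq_mul]
      congr 1
      ring
    rw [hsum, norm_mul, AddChar.norm_apply, one_mul]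
    exact norm_sq_sum_addChar_quadratic hψ h2 (by simp [h3, hm, hs]) _

lemma sum_norm_cubicSum_pow_four (hψ : ψ.IsPrimitive) (h2 : (2 : F) ≠ 0)
    (h3 : (3 : F) ≠ 0) {m : F} (hm : m ≠ 0) :
    ∑ u, ‖cubicSum ψ u m‖ ^ 4 = q ^ 2 * (2 * q - 1) := by
  calc ∑ u, ‖cubicSum ψ u m‖ ^ 4
      = ∑ u, ‖∑ s, ψ (u * s) * ∑ a, ψ (m * (a ^ 3 + (s - a) ^ 3))‖ ^ 2 := by
        simp only [← cubicSum_sq, norm_pow, ← pow_mul]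
    _ = q * ∑ s : F, if s = 0 then (q : ℝ) ^ 2 else q := by
        rw [sum_norm_sq_sum_addChar_mul hψ]
        simp only [norm_sq_sum_addChar_cube_add_cube hψ h2 h3 hm]
    _ = q ^ 2 * (2 * q - 1) := by
        rw [Fintype.sum_eq_add_card_sub_one_mul _ 0 fun s hs => if_neg hs, if_pos rfl]
        ring

lemma cubicSum_zero_right (hψ : ψ.IsPrimitive) (u : F) :
    cubicSum ψ u 0 = if u = 0 then (q : ℂ) else 0 := by
  simp only [cubicSum, zero_mul, zero_add, mul_comm u, AddChar.sum_mulShift _ hψ, Nat.cast_ite,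
    Nat.cast_zero]

lemma sum_norm_cubicSum_zero_right_pow_four (hψ : ψ.IsPrimitive) :
    ∑ u, ‖cubicSum ψ u 0‖ ^ 4 = (q : ℝ) ^ 4 := by
  simp [cubicSum_zero_right hψ, apply_ite]

lemma sum_cubicFourthMoment (hψ : ψ.IsPrimitive) (h2 : (2 : F) ≠ 0) (h3 : (3 : F) ≠ 0) :
    ∑ u, cubicFourthMoment ψ u = q ^ 4 + (q - 1) * (q ^ 2 * (2 * q - 1)) := by
  simp only [cubicFourthMoment]
  rw [sum_comm,
    Fintype.sum_eq_add_card_sub_one_mul _ 0 fun m hm => sum_norm_cubicSum_pow_four hψ h2 h3 hm,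
    sum_norm_cubicSum_zero_right_pow_four hψ]

lemma cubicSum_zero_left_of_orderOf_eq_three (hψ : ψ.IsPrimitive) (hχ : orderOf χ = 3) {m : F}
    (hm : m ≠ 0) : cubicSum ψ 0 m = χ m ^ 2 * gaussSum χ ψ + χ m * gaussSum (χ ^ 2) ψ := by
  have hfiber : cubicSum ψ 0 m = ∑ y, (1 + χ y + χ y ^ 2) * ψ (m * y) := by
    rw [cubicSum, ← sum_fiberwise univ (fun a => a ^ 3)]
    refine sum_congr rfl fun y _ => ?_
    have hcard := χ.card_pow_orderOf_eq y
    simp only [hχ, sum_range_succ, range_zero, sum_empty, pow_zero, pow_one, zero_add] at hcard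
    rw [← hcard, sum_congr rfl fun a ha => by rw [(mem_filter.mp ha).2, zero_mul, add_zero],
      sum_const, nsmul_eq_mul]
  have hinv : χ⁻¹ = χ ^ 2 :=
    inv_eq_of_mul_eq_one_right <| by
      rw [← pow_succ', show 2 + 1 = orderOf χ from hχ.symm, pow_orderOf_eq_one]
  have hinv' : (χ ^ 2)⁻¹ = χ := by rw [← hinv, inv_inv]
  have hshift : ∀ φ : MulChar F ℂ, ∑ y, φ y * ψ (m * y) = φ⁻¹ m * gaussSum φ ψ := fun φ => by
    have := gaussSum_mulShift_eq φ ψ (Units.mk0 m hm)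
    rw [Units.val_mk0] at this
    rw [← this]
    rfl
  have hsum : ∑ y, ψ (m * y) = 0 := by
    simp only [mul_comm m, AddChar.sum_mulShift _ hψ, if_neg hm, Nat.cast_zero]
  simp only [hfiber, add_mul, one_mul, sum_add_distrib, hsum, zero_add,
    ← MulChar.pow_apply' χ two_ne_zero, hshift, hinv, hinv']

lemma cubicSum_zero_left_pow_four (hψ : ψ.IsPrimitive) (hχ : orderOf χ = 3) (m : F) :
    cubicSum ψ 0 m ^ 4 = (if m = 0 then (q : ℂ) ^ 4 else 6 * q ^ 2)
      + χ m * (4 * gaussSum χ ψ ^ 3 * gaussSum (χ ^ 2) ψ + gaussSum (χ ^ 2) ψ ^ 4)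
      + (χ ^ 2) m * (gaussSum χ ψ ^ 4 + 4 * gaussSum χ ψ * gaussSum (χ ^ 2) ψ ^ 3) := by
  split_ifs with hm
  · simp [hm, cubicSum_zero_right hψ, MulChar.map_zero]
  · have hcube : χ m ^ 3 = 1 := hχ ▸ χ.apply_pow_orderOf hm
    rw [cubicSum_zero_left_of_orderOf_eq_three hψ hχ hm, MulChar.pow_apply' χ two_ne_zero,
      ← gaussSum_mul_gaussSum_sq_of_orderOf_eq_three hψ hχ]
    set A := gaussSum χ ψ
    set B := gaussSum (χ ^ 2) ψ
    linear_combination (χ m ^ 2 * (χ m ^ 3 + 1) * A ^ 4 + 4 * χ m * (χ m ^ 3 + 1) * A ^ 3 * B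
      + 6 * (χ m ^ 3 + 1) * A ^ 2 * B ^ 2 + 4 * χ m ^ 2 * A * B ^ 3 + χ m * B ^ 4) * hcube

lemma cubicFourthMoment_zero (hψ : ψ.IsPrimitive) (h3 : 3 ∣ q - 1) :
    cubicFourthMoment ψ 0 = (q : ℝ) ^ 4 + 6 * (q - 1) * q ^ 2 := by
  obtain ⟨χ, hχ⟩ := MulChar.exists_mulChar_orderOf F h3 (isPrimitiveRoot_exp 3 (by norm_num))
  have hχ1 : χ ≠ 1 := fun h => by simp [h] at hχ
  have hχ2 : χ ^ 2 ≠ 1 := pow_ne_one_of_lt_orderOf two_ne_zero (by rw [hχ]; norm_num)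
  have hreal : ∀ m, ((‖cubicSum ψ 0 m‖ ^ 4 : ℝ) : ℂ) = cubicSum ψ 0 m ^ 4 := fun m => by
    rw [ofReal_pow, show 4 = 2 * 2 by rfl, pow_mul, ← mul_conj', conj_cubicSum_zero_left, ← sq,
      ← pow_mul]
  apply ofReal_injective
  simp only [cubicFourthMoment, ofReal_sum, hreal, cubicSum_zero_left_pow_four hψ hχ,
    sum_add_distrib, ← sum_mul, MulChar.sum_eq_zero_of_ne_one hχ1,
    MulChar.sum_eq_zero_of_ne_one hχ2]
  rw [Fintype.sum_eq_add_card_sub_one_mul _ 0 fun m hm => if_neg hm, if_pos rfl]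
  push_cast
  ring

theorem cubicFourthMoment_of_ne_zero (hψ : ψ.IsPrimitive) (h2 : (2 : F) ≠ 0) (h3 : 3 ∣ q - 1)
    {ν : F} (hν : ν ≠ 0) : cubicFourthMoment ψ ν = (q : ℝ) ^ 2 * (2 * q - 7) := by
  -- `q = 0` in `F`, whereas `q ≡ 1 mod 3`
  have h3' : (3 : F) ≠ 0 := fun h => by
    obtain ⟨k, hk⟩ := h3
    have := FiniteField.cast_card_eq_zero F
    rw [← Nat.sub_add_cancel Fintype.card_pos, hk] at this
    push_cast at this
    simp [h] at this
  have hsplit : ∑ u, cubicFourthMoment ψ u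
      = cubicFourthMoment ψ 0 + (q - 1) * cubicFourthMoment ψ ν :=
    Fintype.sum_eq_add_card_sub_one_mul _ 0 fun u hu => by
      simpa [mul_assoc, inv_mul_cancel₀ hν] using
        cubicFourthMoment_mul (mul_ne_zero hu (inv_ne_zero hν)) ν
  rw [sum_cubicFourthMoment hψ h2 h3', cubicFourthMoment_zero hψ h3] at hsplit
  have hq : (q : ℝ) - 1 ≠ 0 := sub_ne_zero.mpr (by exact_mod_cast Fintype.one_lt_card.ne')
  apply mul_left_cancel₀ hq
  linear_combination -hsplit

end CubicSums

lemma ZMod.sum_range_natCast {M : Type*} [AddCommMonoid M] (p : ℕ) [NeZero p] (f : ZMod p → M) :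
    ∑ a ∈ range p, f a = ∑ x, f x :=
  sum_nbij' (fun a => a) ZMod.val (fun _ _ => mem_univ _) (fun x _ => mem_range.mpr x.val_lt)
    (fun _ ha => ZMod.val_cast_of_lt (mem_range.mp ha)) (fun x _ => ZMod.natCast_zmod_val x)
    fun _ _ => rfl

lemma sum_range_exp_eq_cubicSum (p : ℕ) [Fact p.Prime] (n : ℤ) (m : ℕ) :
    ∑ a ∈ range p, Complex.exp (2 * π * I * ((m : ℂ) * (a : ℂ) ^ 3 + (n : ℂ) * (a : ℂ)) / p)
      = cubicSum ZMod.stdAddChar (n : ZMod p) (m : ZMod p) := by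
  rw [cubicSum, ← ZMod.sum_range_natCast]
  refine sum_congr rfl fun a _ => ?_
  have hcast : (m : ZMod p) * (a : ZMod p) ^ 3 + (n : ZMod p) * (a : ZMod p)
      = ((m * a ^ 3 + n * a : ℤ) : ZMod p) := by push_cast; ring
  rw [hcast, ZMod.stdAddChar_coe]
  push_cast
  ring_nf

theorem stmt7_general (p : ℕ) (hp : p.Prime) (n : ℤ) (hn : ¬ (p : ℤ) ∣ n) (h3 : 3 ∣ (p - 1)) :
    ∑ m ∈ Finset.Icc 1 (p - 1),
      ‖∑ a ∈ Finset.range p, Complex.exp (2 * Real.pi * Complex.I * ((m : ℂ) * (a : ℂ) ^ 3 + (n : ℂ) * (a : ℂ)) / p)‖ ^ 4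
    = 2 * (p : ℝ) ^ 3 - 7 * (p : ℝ) ^ 2 := by
  have : Fact p.Prime := ⟨hp⟩
  have h2 : (2 : ZMod p) ≠ 0 := fun h => by
    have hp2 := (Nat.prime_dvd_prime_iff_eq hp Nat.prime_two).mp
      ((ZMod.natCast_eq_zero_iff 2 p).mp (by exact_mod_cast h))
    subst hp2
    norm_num at h3
  have hν : (n : ZMod p) ≠ 0 := by rwa [Ne, ZMod.intCast_zmod_eq_zero_iff_dvd]
  have hψ := ZMod.isPrimitive_stdAddChar p
  have hmoment := cubicFourthMoment_of_ne_zero hψ h2 (by rwa [ZMod.card]) hν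
  have hIcc : Icc 1 (p - 1) = (range p).erase 0 := by
    ext; simp only [mem_Icc, mem_erase, mem_range]; have := hp.one_lt; omega
  simp only [sum_range_exp_eq_cubicSum, hIcc]
  rw [sum_erase _ (by simp [cubicSum_zero_right hψ, hν]),
    ZMod.sum_range_natCast p fun m => ‖cubicSum ZMod.stdAddChar (n : ZMod p) m‖ ^ 4]
  rw [← cubicFourthMoment, hmoment, ZMod.card]
  ring

theorem stmt7 (p : ℕ) (hp : p.Prime) (n : ℤ) (hn : ¬ (p : ℤ) ∣ n) (hodd : Odd p) (h3 : 3 ∣ (p - 1)) :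
    ∑ m ∈ Finset.Icc 1 (p - 1),
      ‖∑ a ∈ Finset.range p, Complex.exp (2 * Real.pi * Complex.I * ((m : ℂ) * (a : ℂ) ^ 3 + (n : ℂ) * (a : ℂ)) / p)‖ ^ 4
    = 2 * (p : ℝ) ^ 3 - 7 * (p : ℝ) ^ 2 :=
  stmt7_general p hp n hn h3
end

section
/- For any odd prime p, the two polynomials f(x) = x³ + x² + x (twisted by (−1/p)) and g(x) = (x²+1)(x²+4x+1) satisfy ∑_{x=1}^{p-1} ((−1/p)·(f(x)/p)) − ∑_{x=1}^{p-1} ((g(x)/p)) = 2; in particular, the difference of these two character sums is independent of p. -/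
/-!
Over a finite field of odd characteristic with quadratic character `χ`, write
`S(h) = ∑ₓ χ(h x)`. For `x ≠ 0` one has `χ(x · h x) = χ(h x / x)`, and the substitution
`t = x + b / x` has fibres of size `1 + χ(t² - 4b)`. Applied to cubics with a root at `0`
this gives the 2-isogeny identity `S(x(x² + ax + b)) = S(x(x² - 2ax + a² - 4b))`; two such
steps carry `x³ + x² + x` to `x(x + 1)(x + 9)`. Applied to `g` with `b = 1` it leaves
`∑ₜ χ(t(t + 4)(t² - 4))`, which after the shift `t = u - 1` is `∑ᵤ χ((u² - 1)(u² - 9))`;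
grouping by `v = u²` and sending `v ↦ -v` turns it into `χ(-1) · S(x(x + 1)(x + 9)) - 1`.
Hence `χ(-1) S(f) - S(g) = 1` over the whole field, and dropping `x = 0` (where `f`
vanishes and `g = 1`) gives `2`.
-/

open Finset

theorem sum_comp_eq_sum_card_filter_mul {ι κ R : Type*} [Fintype κ] [DecidableEq κ]
    [NonAssocSemiring R] (s : Finset ι) (ψ : ι → κ) (G : κ → R) :
    ∑ x ∈ s, G (ψ x) = ∑ t, (#{x ∈ s | ψ x = t} : R) * G t := by
  rw [← sum_fiberwise_of_maps_to' (fun x _ => mem_univ (ψ x)) G]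
  simp only [sum_const, nsmul_eq_mul]

section FiniteField

variable {F : Type*} [Field F] [Fintype F] [DecidableEq F]

local notation "χ" => quadraticChar F

theorem sum_comp_sq (hF : ringChar F ≠ 2) (G : F → ℤ) :
    ∑ x, G (x ^ 2) = ∑ u, (χ u + 1) * G u := by
  rw [sum_comp_eq_sum_card_filter_mul]
  refine sum_congr rfl fun u _ => ?_
  rw [← quadraticChar_card_sqrts hF u, Set.toFinset_ofPred]

theorem card_filter_add_div_eq (hF : ringChar F ≠ 2) {b : F} (hb : b ≠ 0) (t : F) :
    (#{x ∈ univ.erase 0 | x + b / x = t} : ℤ) = χ (t ^ 2 - 4 * b) + 1 := by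
  have h2 : (2 : F) ≠ 0 := Ring.two_ne_zero hF
  rw [← quadraticChar_card_sqrts hF, Set.toFinset_ofPred]
  congr 1
  -- `x + b / x = t` with `x ≠ 0` is `(2x - t)² = t² - 4b`.
  refine card_nbij' (fun x => 2 * x - t) (fun y => (y + t) / 2) ?_ ?_ ?_ ?_
  · intro x hx
    simp only [coe_filter, mem_erase, mem_univ, and_true, true_and, Set.mem_ofPred_eq] at hx ⊢
    obtain ⟨hx0, rfl⟩ := hx
    field_simp
    ring
  · intro y hy
    simp only [coe_filter, mem_erase, mem_univ, and_true, true_and, Set.mem_ofPred_eq] at hy ⊢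
    have hprod : (y + t) / 2 * ((t - y) / 2) = b := by
      field_simp
      linear_combination -hy
    have hx0 : (y + t) / 2 ≠ 0 := left_ne_zero_of_mul (hprod ▸ hb)
    refine ⟨hx0, ?_⟩
    rw [← hprod, mul_div_cancel_left₀ _ hx0]
    field_simp
    ring
  · intro x _
    field_simp
    ring
  · intro y _
    field_simp
    ring

theorem sum_erase_zero_comp_add_div (hF : ringChar F ≠ 2) {b : F} (hb : b ≠ 0) (G : F → ℤ) :
    ∑ x ∈ univ.erase 0, G (x + b / x) = ∑ t, (χ (t ^ 2 - 4 * b) + 1) * G t := by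
  rw [sum_comp_eq_sum_card_filter_mul]
  simp only [card_filter_add_div_eq hF hb]

theorem sum_quadraticChar_add (hF : ringChar F ≠ 2) (c : F) : ∑ x, χ (x + c) = 0 :=
  (Fintype.sum_equiv (Equiv.addRight c) _ _ fun _ => rfl).trans (quadraticChar_sum_zero hF)

theorem sum_quadraticChar_mul_sub_one (hF : ringChar F ≠ 2) : ∑ x, χ (x * (x - 1)) = -1 := by
  have hJ := jacobiSum_nontrivial_inv (quadraticChar_ne_one hF)
  rw [(quadraticChar_isQuadratic F).inv, jacobiSum] at hJ
  calc ∑ x, χ (x * (x - 1)) = χ (-1) * ∑ x, χ x * χ (1 - x) := by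
        rw [mul_sum]
        refine sum_congr rfl fun x _ => ?_
        rw [← map_mul, ← map_mul]
        ring_nf
    _ = -1 := by
        rw [hJ, mul_neg, ← map_mul, neg_one_mul, neg_neg, map_one]

theorem sum_quadraticChar_sub_mul_sub (hF : ringChar F ≠ 2) {r s : F} (hrs : r ≠ s) :
    ∑ x, χ ((x - r) * (x - s)) = -1 := by
  have hd : s - r ≠ 0 := sub_ne_zero.mpr hrs.symm
  rw [← sum_quadraticChar_mul_sub_one hF]
  refine (Fintype.sum_bijective (fun y => r + (s - r) * y) ?_ _ _ fun y => ?_).symm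
  · exact (AddGroup.addLeft_bijective r).comp (mulLeft_bijective₀ _ hd)
  · rw [show (r + (s - r) * y - r) * (r + (s - r) * y - s) = (s - r) ^ 2 * (y * (y - 1)) by ring,
      map_mul χ ((s - r) ^ 2), quadraticChar_sq_one' hd, one_mul]

theorem sum_quadraticChar_eq_add_sum_erase_zero {f g : F → F}
    (hfg : ∀ x ≠ 0, f x = x ^ 2 * g x) :
    ∑ x, χ (f x) = χ (f 0) + ∑ x ∈ univ.erase 0, χ (g x) := by
  rw [← add_sum_erase _ _ (mem_univ 0)]
  congr 1
  refine sum_congr rfl fun x hx => ?_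
  have hx0 := ne_of_mem_erase hx
  rw [hfg x hx0, map_mul, quadraticChar_sq_one' hx0, one_mul]

theorem sum_quadraticChar_mul_quadratic_eq (hF : ringChar F ≠ 2) (a : F) {b : F} (hb : b ≠ 0) :
    ∑ x, χ (x * (x ^ 2 + a * x + b))
      = ∑ x, χ (x * (x ^ 2 - 2 * a * x + (a ^ 2 - 4 * b))) := by
  calc ∑ x, χ (x * (x ^ 2 + a * x + b))
      = ∑ x ∈ univ.erase 0, χ (x + b / x + a) := by
        rw [sum_quadraticChar_eq_add_sum_erase_zero (g := fun x => x + b / x + a), zero_mul,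
          quadraticChar_zero, zero_add]
        intro x hx
        field_simp
        ring
    _ = ∑ t, (χ (t ^ 2 - 4 * b) + 1) * χ (t + a) :=
        sum_erase_zero_comp_add_div hF hb fun t => χ (t + a)
    _ = ∑ t, χ ((t ^ 2 - 4 * b) * (t + a)) := by
        simp only [add_one_mul, sum_add_distrib, sum_quadraticChar_add hF, add_zero, map_mul]
    _ = ∑ x, χ (x * (x ^ 2 - 2 * a * x + (a ^ 2 - 4 * b))) :=
        Fintype.sum_equiv (Equiv.addRight a) _ _ fun t => by
          simp only [Equiv.coe_addRight]
          ring_nf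

theorem sum_quadraticChar_cube_add_sq_add_self (hF : ringChar F ≠ 2) :
    ∑ x, χ (x ^ 3 + x ^ 2 + x) = ∑ x, χ (x * (x ^ 2 + 10 * x + 9)) := by
  have h4 : (4 : F) ≠ 0 := by
    convert pow_ne_zero 2 (Ring.two_ne_zero hF) using 1
    norm_num
  calc ∑ x, χ (x ^ 3 + x ^ 2 + x)
      = ∑ x, χ (x * (x ^ 2 + 1 * x + 1)) := Fintype.sum_congr _ _ fun x => by ring_nf
    _ = ∑ x, χ (x * (x ^ 2 - 2 * 1 * x + (1 ^ 2 - 4 * 1))) :=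
        sum_quadraticChar_mul_quadratic_eq hF 1 one_ne_zero
    _ = ∑ x, χ (x * (x ^ 2 + -5 * x + 4)) :=
        Fintype.sum_equiv (Equiv.addRight 1) _ _ fun x => by
          simp only [Equiv.coe_addRight]
          ring_nf
    _ = ∑ x, χ (x * (x ^ 2 - 2 * -5 * x + ((-5) ^ 2 - 4 * 4))) :=
        sum_quadraticChar_mul_quadratic_eq hF (-5) h4
    _ = ∑ x, χ (x * (x ^ 2 + 10 * x + 9)) := Fintype.sum_congr _ _ fun x => by ring_nf

theorem sum_quadraticChar_sq_sub_one_mul_sq_sub_nine (hF : ringChar F ≠ 2) :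
    ∑ u, χ ((u ^ 2 - 1) * (u ^ 2 - 9)) = χ (-1) * ∑ x, χ (x * (x ^ 2 + 10 * x + 9)) - 1 := by
  have h19 : (1 : F) ≠ 9 := by
    rw [ne_comm, ← sub_ne_zero]
    convert pow_ne_zero 3 (Ring.two_ne_zero hF) using 1
    norm_num
  calc ∑ u, χ ((u ^ 2 - 1) * (u ^ 2 - 9))
      = ∑ v, (χ v + 1) * χ ((v - 1) * (v - 9)) :=
        sum_comp_sq hF fun v => χ ((v - 1) * (v - 9))
    _ = ∑ v, χ (v * ((v - 1) * (v - 9))) - 1 := by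
        simp only [add_one_mul, sum_add_distrib]
        rw [sum_quadraticChar_sub_mul_sub hF h19]
        simp only [map_mul]
        ring
    _ = χ (-1) * ∑ x, χ (x * (x ^ 2 + 10 * x + 9)) - 1 := by
        rw [mul_sum]
        congr 1
        refine Fintype.sum_equiv (Equiv.neg F) _ _ fun v => ?_
        rw [Equiv.neg_apply, ← map_mul]
        ring_nf

theorem sum_quadraticChar_sq_add_one_mul_sq_add_four_mul_add_one (hF : ringChar F ≠ 2) :
    ∑ x, χ ((x ^ 2 + 1) * (x ^ 2 + 4 * x + 1))
      = χ (-1) * ∑ x, χ (x * (x ^ 2 + 10 * x + 9)) - 1 := by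
  have h04 : (0 : F) ≠ -4 := by
    rw [ne_comm, neg_ne_zero]
    convert pow_ne_zero 2 (Ring.two_ne_zero hF) using 1
    norm_num
  have hpair : ∑ t, χ (t * (t + 4)) = -1 := by
    simpa using sum_quadraticChar_sub_mul_sub hF h04
  calc ∑ x, χ ((x ^ 2 + 1) * (x ^ 2 + 4 * x + 1))
      = 1 + ∑ x ∈ univ.erase 0, χ ((x + 1 / x) * (x + 1 / x + 4)) := by
        rw [sum_quadraticChar_eq_add_sum_erase_zero (g := fun x => (x + 1 / x) * (x + 1 / x + 4))]
        · norm_num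
        · intro x hx
          field_simp
          ring
    _ = 1 + ∑ t, (χ (t ^ 2 - 4 * 1) + 1) * χ (t * (t + 4)) := by
        rw [sum_erase_zero_comp_add_div hF one_ne_zero fun t => χ (t * (t + 4))]
    _ = ∑ t, χ ((t ^ 2 - 4 * 1) * (t * (t + 4))) := by
        simp only [add_one_mul, sum_add_distrib]
        rw [hpair]
        simp only [map_mul]
        ring
    _ = ∑ u, χ ((u ^ 2 - 1) * (u ^ 2 - 9)) :=
        Fintype.sum_equiv (Equiv.addRight 1) _ _ fun t => by
          simp only [Equiv.coe_addRight]
          ring_nf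
    _ = χ (-1) * ∑ x, χ (x * (x ^ 2 + 10 * x + 9)) - 1 :=
        sum_quadraticChar_sq_sub_one_mul_sq_sub_nine hF

end FiniteField

theorem ZMod.sum_Icc_natCast_eq_sum_erase_zero {p : ℕ} [NeZero p] {M : Type*} [AddCommMonoid M]
    (H : ZMod p → M) : ∑ x ∈ Icc 1 (p - 1), H x = ∑ y ∈ univ.erase 0, H y := by
  refine sum_nbij' (fun x : ℕ => (x : ZMod p)) ZMod.val ?_ ?_ ?_ ?_ fun _ _ => rfl
  · intro x hx
    simp only [mem_Icc, mem_erase, mem_univ, and_true] at hx ⊢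
    rw [← ZMod.val_ne_zero, ZMod.val_cast_of_lt (by omega)]
    omega
  · intro y hy
    simp only [mem_Icc, mem_erase, mem_univ, and_true] at hy ⊢
    have := ZMod.val_lt y
    have := (ZMod.val_ne_zero y).mpr hy
    omega
  · intro x hx
    rw [mem_Icc] at hx
    exact ZMod.val_cast_of_lt (by omega)
  · intro y _
    exact ZMod.natCast_zmod_val y

theorem stmt16 (p : ℕ) [hp : Fact p.Prime] (hodd : Odd p) :
    (∑ x ∈ Finset.Icc 1 (p - 1),
        (legendreSym p (-1)) * legendreSym p ((x : ℤ) ^ 3 + (x : ℤ) ^ 2 + (x : ℤ)))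
      - ∑ x ∈ Finset.Icc 1 (p - 1),
        legendreSym p ((((x : ℤ) ^ 2 + 1) * ((x : ℤ) ^ 2 + 4 * (x : ℤ) + 1)))
    = 2 := by
  have hF : ringChar (ZMod p) ≠ 2 := by
    rw [ZMod.ringChar_zmod_n]
    rintro rfl
    exact Nat.not_odd_iff_even.mpr even_two hodd
  simp only [legendreSym, Int.cast_add, Int.cast_mul, Int.cast_pow, Int.cast_natCast, Int.cast_neg,
    Int.cast_one, Int.cast_ofNat]
  rw [← mul_sum,
    ZMod.sum_Icc_natCast_eq_sum_erase_zero fun y => quadraticChar (ZMod p) (y ^ 3 + y ^ 2 + y),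
    ZMod.sum_Icc_natCast_eq_sum_erase_zero fun y =>
      quadraticChar (ZMod p) ((y ^ 2 + 1) * (y ^ 2 + 4 * y + 1)),
    sum_erase_eq_sub (mem_univ 0), sum_erase_eq_sub (mem_univ 0),
    sum_quadraticChar_cube_add_sq_add_self hF,
    sum_quadraticChar_sq_add_one_mul_sq_add_four_mul_add_one hF]
  simp only [ne_eq, OfNat.ofNat_ne_zero, not_false_eq_true, zero_pow, add_zero, zero_add,
    mul_zero, mul_one, quadraticChar_zero, map_one, sub_zero]
  ring
end
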